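/- Let (X,ρ) be a controlled rectangular b-metric space, T : X → X a k-contraction with 0 < k < 1, and {xₙ} a Picard orbit with pairwise distinct terms converging to ν ∈ X (i.e., ρ(xₙ, ν) → 0) such that xₙ ∉ {ν, Tν} for all n. Suppose sup over n of θ(ν, Tν, xₙ, xₙ₊₁) is bounded. Then Tν = ν. -/
import Mathlib


open Filter

/-- The limit of a convergent Picard orbit avoiding ν and Tν is a fixed point. -/
theorem orbit_limit_is_fixed {X : Type*} (ρ : X → X → ℝ)
    (θ : X → X → X → X → ℝ)
    (hρ0 : ∀ x y, 0 ≤ ρ x y)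
    (hρeq : ∀ x y, ρ x y = 0 ↔ x = y)
    (hρsym : ∀ x y, ρ x y = ρ y x)
    (hθ : ∀ x y u v, 1 ≤ θ x y u v)
    (hrect : ∀ x y u v : X, x ≠ y → x ≠ u → x ≠ v → y ≠ u → y ≠ v → u ≠ v →
      ρ x y ≤ θ x y u v * (ρ x u + ρ u v + ρ v y))
    (T : X → X) (k : ℝ) (hk0 : 0 < k) (hk1 : k < 1)
    (hT : ∀ x y, ρ (T x) (T y) ≤ k * ρ x y)
    (x₀ : X) (hdist : ∀ i j : ℕ, i ≠ j → T^[i] x₀ ≠ T^[j] x₀)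
    (ν : X)
    (hconv : Tendsto (fun n : ℕ => ρ (T^[n] x₀) ν) atTop (nhds 0))
    (havoid : ∀ n : ℕ, T^[n] x₀ ≠ ν ∧ T^[n] x₀ ≠ T ν)
    (hbdd : ∃ C : ℝ, ∀ n : ℕ, θ ν (T ν) (T^[n] x₀) (T^[n+1] x₀) ≤ C) :
    T ν = ν := by
  by_contra hne
  obtain ⟨C, hC⟩ := hbdd
  have hC0 : ∀ n, (0:ℝ) ≤ θ ν (T ν) (T^[n] x₀) (T^[n+1] x₀) :=
    fun n => le_trans zero_le_one (hθ _ _ _ _)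
  -- step bound: ρ(xₙ, xₙ₊₁) ≤ kⁿ ρ(x₀, x₁)
  have hstep : ∀ n : ℕ, ρ (T^[n] x₀) (T^[n+1] x₀) ≤ k^n * ρ x₀ (T x₀) := by
    intro n
    induction n with
    | zero => simp
    | succ n ih =>
      have h1 : ρ (T^[n+1] x₀) (T^[n+2] x₀) ≤ k * ρ (T^[n] x₀) (T^[n+1] x₀) := by
        have h := hT (T^[n] x₀) (T^[n+1] x₀)
        rwa [← Function.iterate_succ_apply' T n, ← Function.iterate_succ_apply' T (n+1)] at h
      calc ρ (T^[n+1] x₀) (T^[n+2] x₀) ≤ k * ρ (T^[n] x₀) (T^[n+1] x₀) := h1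
        _ ≤ k * (k^n * ρ x₀ (T x₀)) := by
            exact mul_le_mul_of_nonneg_left ih (le_of_lt hk0)
        _ = k^(n+1) * ρ x₀ (T x₀) := by ring
  -- main bound
  have hmain : ∀ n : ℕ, ρ ν (T ν) ≤
      C * (ρ (T^[n] x₀) ν + k^n * ρ x₀ (T x₀) + k * ρ (T^[n] x₀) ν) := by
    intro n
    have hv : ν ≠ T ν := fun h => hne h.symm
    have h1 := (havoid n).1
    have h2 := (havoid n).2
    have h3 := (havoid (n+1)).1
    have h4 := (havoid (n+1)).2
    have hnn := hdist n (n+1) (by omega)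
    have hr := hrect ν (T ν) (T^[n] x₀) (T^[n+1] x₀) hv (Ne.symm h1) (Ne.symm h3)
      (Ne.symm h2) (Ne.symm h4) hnn
    have hTv : ρ (T^[n+1] x₀) (T ν) ≤ k * ρ (T^[n] x₀) ν := by
      rw [Function.iterate_succ_apply' T n]
      exact hT _ _
    have hsum : ρ ν (T^[n] x₀) + ρ (T^[n] x₀) (T^[n+1] x₀) + ρ (T^[n+1] x₀) (T ν)
        ≤ ρ (T^[n] x₀) ν + k^n * ρ x₀ (T x₀) + k * ρ (T^[n] x₀) ν := by
      rw [hρsym ν (T^[n] x₀)]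
      exact add_le_add (add_le_add le_rfl (hstep n)) hTv
    have hsum0 : (0:ℝ) ≤ ρ ν (T^[n] x₀) + ρ (T^[n] x₀) (T^[n+1] x₀) + ρ (T^[n+1] x₀) (T ν) :=
      add_nonneg (add_nonneg (hρ0 _ _) (hρ0 _ _)) (hρ0 _ _)
    calc ρ ν (T ν) ≤ θ ν (T ν) (T^[n] x₀) (T^[n+1] x₀) *
          (ρ ν (T^[n] x₀) + ρ (T^[n] x₀) (T^[n+1] x₀) + ρ (T^[n+1] x₀) (T ν)) := hr
      _ ≤ C * (ρ (T^[n] x₀) ν + k^n * ρ x₀ (T x₀) + k * ρ (T^[n] x₀) ν) :=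
          mul_le_mul (hC n) hsum hsum0 (le_trans (hC0 n) (hC n))
  -- RHS tends to 0
  have hpow : Tendsto (fun n : ℕ => k^n) atTop (nhds 0) :=
    tendsto_pow_atTop_nhds_zero_of_lt_one (le_of_lt hk0) hk1
  have htend : Tendsto (fun n : ℕ =>
      C * (ρ (T^[n] x₀) ν + k^n * ρ x₀ (T x₀) + k * ρ (T^[n] x₀) ν)) atTop (nhds 0) := by
    have := ((hconv.add (hpow.mul_const (ρ x₀ (T x₀)))).add (hconv.const_mul k)).const_mul C
    simpa using this
  have hle : ρ ν (T ν) ≤ 0 := ge_of_tendsto' htend hmain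
  have : ρ ν (T ν) = 0 := le_antisymm hle (hρ0 _ _)
  exact hne ((hρeq _ _).mp this).symm
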